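/- arXiv:1304.7649 — 4 statements merged into one kernel-verified Lean document; each statement's English description precedes it below -/
import Mathlib

section
/- Let p be an odd prime, f ≥ 1, e(K/L) = p^f - 1, e = e'·(p^f-1) for some e' ≥ 1. Consider integers r_i ∈ [0,e], c_i ∈ Z/(p^f-1) for i ∈ Z/fZ with c_{i+1} ≡ p(c_i + r_i) mod (p^f-1). Then α_i := p(p^{f-1} r_i + ... + r_{i+f-1})/(p^f-1) is an integer for all i, and c_i + α_i is well-defined modulo p^f - 1 with (c_{i+1} + α_{i+1}) ≡ p(c_i + α_i) mod (p^f - 1). -/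
/-!
With `S i = ∑_{j<f} p^(f-1-j) r (i+j)`, shifting the index gives
`p S i = (p^f - 1) r i + S (i+1)`. Going once around the cycle with the congruence for `c`
gives `c i ≡ p^f c i + p S i ≡ c i + p S i`, so `p^f - 1` divides `p S i`; then the shift
identity says `α (i+1) = p α i - p r i`, which turns the relation for `c` into the one for
`c + α`.
-/

open Finset

section
variable {R : Type*} [CommRing R] {f : ℕ}

def twistSum (p : R) (r : ZMod f → R) (i : ZMod f) : R :=
  ∑ j ∈ range f, p ^ (f - 1 - j) * r (i + j)

theorem mul_twistSum (p : R) (r : ZMod f → R) (i : ZMod f) :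
    p * twistSum p r i = ∑ j ∈ range f, p ^ (f - j) * r (i + j) := by
  rw [twistSum, mul_sum]
  refine sum_congr rfl fun j hj => ?_
  rw [show f - j = f - 1 - j + 1 by have := mem_range.mp hj; omega, pow_succ]
  ring

theorem mul_twistSum_eq_add_twistSum_add_one (p : R) (r : ZMod f → R) (i : ZMod f) :
    p * twistSum p r i = (p ^ f - 1) * r i + twistSum p r (i + 1) := by
  cases f with
  | zero => simp [twistSum]
  | succ m =>
    have hwrap : i + 1 + (m : ZMod (m + 1)) = i := by
      rw [add_assoc, add_comm (1 : ZMod _), ← Nat.cast_succ, ZMod.natCast_self, add_zero]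
    have hshift : ∀ j : ℕ, i + ((j + 1 : ℕ) : ZMod (m + 1)) = i + 1 + j := by
      intro j; push_cast; ring
    rw [mul_twistSum, sum_range_succ', twistSum, sum_range_succ]
    simp only [hshift, hwrap, Nat.add_sub_add_right, Nat.add_sub_cancel, Nat.sub_self,
      Nat.cast_zero, add_zero, Nat.sub_zero, pow_zero, one_mul]
    ring
end

theorem modEq_add_natCast_of_modEq_add_one {ι : Type*} [AddMonoidWithOne ι] {n p : ℤ}
    {c r : ι → ℤ} (hc : ∀ i, c (i + 1) ≡ p * (c i + r i) [ZMOD n]) (k : ℕ) (i : ι) :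
    c (i + k) ≡ p ^ k * c i + ∑ j ∈ range k, p ^ (k - j) * r (i + j) [ZMOD n] := by
  induction k with
  | zero => simp
  | succ k ih =>
    have hsum : ∑ j ∈ range k, p ^ (k + 1 - j) * r (i + j)
        = p * ∑ j ∈ range k, p ^ (k - j) * r (i + j) := by
      rw [mul_sum]
      refine sum_congr rfl fun j hj => ?_
      rw [show k + 1 - j = k - j + 1 by have := mem_range.mp hj; omega, pow_succ]
      ring
    calc c (i + (k + 1 : ℕ)) = c (i + k + 1) := by rw [Nat.cast_succ, add_assoc]
      _ ≡ p * (c (i + k) + r (i + k)) [ZMOD n] := hc _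
      _ ≡ p * (p ^ k * c i + ∑ j ∈ range k, p ^ (k - j) * r (i + j) + r (i + k)) [ZMOD n] := by
        gcongr
      _ = _ := by rw [sum_range_succ, hsum, Nat.add_sub_cancel_left, pow_succ]; ring

theorem sub_one_dvd_mul_twistSum {f : ℕ} {p : ℤ} {r c : ZMod f → ℤ}
    (hc : ∀ i, c (i + 1) ≡ p * (c i + r i) [ZMOD p ^ f - 1]) (i : ZMod f) :
    p ^ f - 1 ∣ p * twistSum p r i := by
  have hcycle := modEq_add_natCast_of_modEq_add_one hc f i
  rw [ZMod.natCast_self, add_zero, ← mul_twistSum] at hcycle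
  have hpow : c i ≡ p ^ f * c i [ZMOD p ^ f - 1] :=
    Int.modEq_iff_dvd.mpr ⟨c i, by ring⟩
  rw [← Int.modEq_zero_iff_dvd]
  exact Int.ModEq.add_left_cancel' (c i) <| by
    simpa using (hpow.add_right _).trans hcycle.symm

theorem stmt_10_general (p f : ℕ) (hp : p.Prime) (hf : 1 ≤ f)
    (r c : ZMod f → ℤ)
    (hc : ∀ i, c (i + 1) ≡ p * (c i + r i) [ZMOD ((p : ℤ) ^ f - 1)]) :
    ∃ α : ZMod f → ℤ,
      (∀ i, ((p : ℤ) ^ f - 1) * α i =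
        p * ∑ j ∈ Finset.range f, (p : ℤ) ^ (f - 1 - j) * r (i + (j : ZMod f))) ∧
      (∀ i, c (i + 1) + α (i + 1) ≡ p * (c i + α i) [ZMOD ((p : ℤ) ^ f - 1)]) := by
  set M : ℤ := (p : ℤ) ^ f - 1
  have hM : M ≠ 0 := (sub_pos.mpr (one_lt_pow₀ (by exact_mod_cast hp.one_lt) (by omega))).ne'
  set α : ZMod f → ℤ := fun i => p * twistSum (p : ℤ) r i / M
  have hα : ∀ i, M * α i = p * twistSum (p : ℤ) r i :=
    fun i => Int.mul_ediv_cancel' (sub_one_dvd_mul_twistSum hc i)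
  refine ⟨α, hα, fun i => ?_⟩
  have hrec : α (i + 1) = p * α i - p * r i := mul_left_cancel₀ hM <| by
    linear_combination
      hα (i + 1) - p * hα i - p * mul_twistSum_eq_add_twistSum_add_one (p : ℤ) r i
  calc c (i + 1) + α (i + 1) ≡ p * (c i + r i) + (p * α i - p * r i) [ZMOD M] := by
        rw [hrec]; exact (hc i).add_right _
    _ = p * (c i + α i) := by ring

/-- If `c (i+1) ≡ p (c i + r i) (mod p^f - 1)`, then the rational numbers
`α_i = p (Σ_j p^{f-1-j} r_{i+j})/(p^f - 1)` are integers and the exponents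
`c i + α i` satisfy the Frobenius-twist relation mod `p^f - 1`. -/
theorem stmt_10 (p f e' : ℕ) (hp : p.Prime) (hodd : Odd p) (hf : 1 ≤ f) (he' : 1 ≤ e')
    (r c : ZMod f → ℤ)
    (hr : ∀ i, 0 ≤ r i ∧ r i ≤ (e' : ℤ) * ((p : ℤ) ^ f - 1))
    (hc : ∀ i, c (i + 1) ≡ p * (c i + r i) [ZMOD ((p : ℤ) ^ f - 1)]) :
    ∃ α : ZMod f → ℤ,
      (∀ i, ((p : ℤ) ^ f - 1) * α i =
        p * ∑ j ∈ Finset.range f, (p : ℤ) ^ (f - 1 - j) * r (i + (j : ZMod f))) ∧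
      (∀ i, c (i + 1) + α (i + 1) ≡ p * (c i + α i) [ZMOD ((p : ℤ) ^ f - 1)]) :=
  stmt_10_general p f hp hf r c hc
end

section
/- Existence of upper bounds for models: let p be odd, f ≥ 1, N = p^f - 1, e divisible by N. Suppose r_i, s_i ∈ [0,e] are integers with α_i := p(Σ_j p^{f-1-j} r_{i+j})/N and β_i := p(Σ_j p^{f-1-j} s_{i+j})/N satisfying β_i - α_i ∈ Z for all i. Define γ_i = max(α_i, β_i), n_i = (1/p)·max(0, β_i - α_i), and t_i = r_i + p·n_i - n_{i+1}. Then each n_i is an integer, t_i ∈ [0, e], and p(Σ_j p^{f-1-j} t_{i+j})/N = γ_i for all i. -/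
/-!
The `γ`-invariant `γ(u)_i = p (∑_j p^(f-1-j) u_(i+j)) / (p^f - 1)` is the unique solution of the
cyclic recurrence `x_(i+1) = p (x_i - u_i)`: the difference of two solutions gets multiplied by
`p^f ≠ 1` on going once around `ZMod f`. For `δ = β - α` this gives `δ_(i+1) = p (δ_i + r_i - s_i)`,
so `n_(i+1) = max(0, δ_i + r_i - s_i)` is an integer and
`t_i = r_i + max(0, δ_i) - max(0, δ_i + r_i - s_i) ∈ [0, e]`.
Finally `max(α, β) = α + p n` satisfies the recurrence for `t`, hence is its `γ`-invariant.
-/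

open Finset

section GammaInvariant

variable {K : Type*} [Field K] {f : ℕ}

def gammaInvariant (q : K) (u : ZMod f → K) (i : ZMod f) : K :=
  q * (∑ j ∈ range f, q ^ (f - 1 - j) * u (i + (j : ZMod f))) / (q ^ f - 1)

lemma mul_sum_range_eq_sum_range_add_one (q : K) (m : ℕ) (u : ZMod (m + 1) → K) (i : ZMod (m + 1)) :
    q * ∑ j ∈ range (m + 1), q ^ (m - j) * u (i + (j : ZMod (m + 1))) =
      (q ^ (m + 1) - 1) * u i + ∑ j ∈ range (m + 1), q ^ (m - j) * u (i + 1 + (j : ZMod (m + 1))) := by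
  have hwrap : i + 1 + (m : ZMod (m + 1)) = i := by
    have : ((m + 1 : ℕ) : ZMod (m + 1)) = 0 := ZMod.natCast_self _
    push_cast at this
    linear_combination this
  rw [mul_sum, sum_range_succ', sum_range_succ, hwrap]
  have hshift : ∀ j ∈ range m, q * (q ^ (m - (j + 1)) * u (i + ((j + 1 : ℕ) : ZMod (m + 1)))) =
      q ^ (m - j) * u (i + 1 + (j : ZMod (m + 1))) := by
    intro j hj
    rw [← mul_assoc, ← pow_succ', Nat.sub_add_eq, Nat.sub_add_cancel (by rw [mem_range] at hj; omega)]
    push_cast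
    ring_nf
  rw [sum_congr rfl hshift]
  simp only [tsub_zero, Nat.cast_zero, add_zero, tsub_self, pow_zero, one_mul]
  ring

lemma gammaInvariant_add_one {q : K} (hf : f ≠ 0) (hq : q ^ f ≠ 1) (u : ZMod f → K) (i : ZMod f) :
    gammaInvariant q u (i + 1) = q * (gammaInvariant q u i - u i) := by
  obtain ⟨m, rfl⟩ : ∃ m, f = m + 1 := ⟨f - 1, by omega⟩
  have hq' : q ^ (m + 1) - 1 ≠ 0 := sub_ne_zero.mpr hq
  have h := mul_sum_range_eq_sum_range_add_one q m u i
  unfold gammaInvariant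
  simp only [Nat.add_sub_cancel]
  field_simp
  linear_combination -q * h

lemma apply_add_natCast_eq_pow_mul {q : K} {d : ZMod f → K} (hd : ∀ i, d (i + 1) = q * d i)
    (m : ℕ) (i : ZMod f) : d (i + m) = q ^ m * d i := by
  induction m generalizing i with
  | zero => simp
  | succ m ih => rw [Nat.cast_succ, ← add_assoc, hd, ih, pow_succ']; ring

lemma eq_zero_of_apply_add_one_eq_mul {q : K} (hq : q ^ f ≠ 1) {d : ZMod f → K}
    (hd : ∀ i, d (i + 1) = q * d i) : d = 0 := by
  funext i
  have h := apply_add_natCast_eq_pow_mul hd f i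
  rw [ZMod.natCast_self, add_zero] at h
  have : (q ^ f - 1) * d i = 0 := by linear_combination -h
  exact (mul_eq_zero.mp this).resolve_left (sub_ne_zero.mpr hq)

lemma eq_gammaInvariant_of_apply_add_one {q : K} (hf : f ≠ 0) (hq : q ^ f ≠ 1)
    {u x : ZMod f → K} (hx : ∀ i, x (i + 1) = q * (x i - u i)) : x = gammaInvariant q u := by
  refine sub_eq_zero.mp (eq_zero_of_apply_add_one_eq_mul hq fun i => ?_)
  simp only [Pi.sub_apply, hx, gammaInvariant_add_one hf hq]
  ring

end GammaInvariant

lemma add_max_zero_sub_max_zero_mem_Icc {K : Type*} [Field K] [LinearOrder K]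
    [IsStrictOrderedRing K] {a r s e : K} (hr : r ∈ Set.Icc 0 e) (hs : s ∈ Set.Icc 0 e) :
    r + max 0 a - max 0 (a + r - s) ∈ Set.Icc 0 e := by
  obtain ⟨hr0, hre⟩ := hr
  obtain ⟨hs0, hse⟩ := hs
  constructor <;>
    rcases max_cases (0 : K) a with ⟨h1, _⟩ | ⟨h1, _⟩ <;>
    rcases max_cases (0 : K) (a + r - s) with ⟨h2, _⟩ | ⟨h2, _⟩ <;>
    rw [h1, h2] <;> linarith

theorem stmt_14_general (p f e : ℕ) (hp : p.Prime) (hf : 1 ≤ f)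
    (r s : ZMod f → ℤ)
    (hr : ∀ i, 0 ≤ r i ∧ r i ≤ (e : ℤ)) (hs : ∀ i, 0 ≤ s i ∧ s i ≤ (e : ℤ))
    (α β : ZMod f → ℚ)
    (hα : ∀ i, α i = p * (∑ j ∈ Finset.range f, (p : ℚ) ^ (f - 1 - j) * r (i + (j : ZMod f))) /
      ((p : ℚ) ^ f - 1))
    (hβ : ∀ i, β i = p * (∑ j ∈ Finset.range f, (p : ℚ) ^ (f - 1 - j) * s (i + (j : ZMod f))) /
      ((p : ℚ) ^ f - 1))
    (hint : ∀ i, ∃ k : ℤ, β i - α i = k)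
    (n t : ZMod f → ℚ)
    (hn : ∀ i, n i = max 0 (β i - α i) / p)
    (ht : ∀ i, t i = r i + p * n i - n (i + 1)) :
    (∀ i, ∃ k : ℤ, n i = k) ∧ (∀ i, 0 ≤ t i ∧ t i ≤ (e : ℚ)) ∧
    (∀ i, p * (∑ j ∈ Finset.range f, (p : ℚ) ^ (f - 1 - j) * t (i + (j : ZMod f))) /
      ((p : ℚ) ^ f - 1) = max (α i) (β i)) := by
  have hf0 : f ≠ 0 := by omega
  have hp0 : (0 : ℚ) < p := by exact_mod_cast hp.pos
  have hq : (p : ℚ) ^ f ≠ 1 := (one_lt_pow₀ (by exact_mod_cast hp.one_lt) hf0).ne'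
  have hα_succ (i) : α (i + 1) = p * (α i - r i) := by
    have hα' : α = gammaInvariant (p : ℚ) (fun i => (r i : ℚ)) := funext hα
    rw [hα']
    exact gammaInvariant_add_one hf0 hq _ i
  have hβ_succ (i) : β (i + 1) = p * (β i - s i) := by
    have hβ' : β = gammaInvariant (p : ℚ) (fun i => (s i : ℚ)) := funext hβ
    rw [hβ']
    exact gammaInvariant_add_one hf0 hq _ i
  have hpn (i) : p * n i = max 0 (β i - α i) := by rw [hn, mul_div_cancel₀ _ hp0.ne']
  have hn_succ (i) : n (i + 1) = max 0 (β i - α i + r i - s i) := by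
    have hδ_succ : β (i + 1) - α (i + 1) = p * (β i - α i + r i - s i) := by
      rw [hα_succ, hβ_succ]
      ring
    rw [hn, hδ_succ, ← mul_zero (p : ℚ), ← mul_max_of_nonneg _ _ hp0.le, mul_zero,
      mul_div_cancel_left₀ _ hp0.ne']
  refine ⟨fun i => ?_, fun i => ?_, fun i => ?_⟩
  · obtain ⟨j, rfl⟩ : ∃ j, i = j + 1 := ⟨i - 1, by ring⟩
    obtain ⟨k, hk⟩ := hint j
    refine ⟨max 0 (k + r j - s j), ?_⟩
    rw [hn_succ, hk]
    push_cast
    ring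
  · have ht' : t i = r i + max 0 (β i - α i) - max 0 (β i - α i + r i - s i) := by
      rw [ht, hpn, hn_succ]
    rw [ht']
    exact add_max_zero_sub_max_zero_mem_Icc
      ⟨by exact_mod_cast (hr i).1, by exact_mod_cast (hr i).2⟩
      ⟨by exact_mod_cast (hs i).1, by exact_mod_cast (hs i).2⟩
  · have hmax (i) : max (α i) (β i) = α i + p * n i := by
      rw [hpn, ← max_add_add_left, add_zero, add_sub_cancel]
    have hγ : (fun i => max (α i) (β i)) = gammaInvariant (p : ℚ) t :=
      eq_gammaInvariant_of_apply_add_one hf0 hq fun i => by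
        rw [hmax (i + 1), hmax i, ht, hα_succ]
        ring
    exact (congrFun hγ i).symm

/-- Existence of upper bounds for models: with `γ_i = max(α_i, β_i)`,
`n_i = max(0, β_i - α_i)/p` and `t_i = r_i + p n_i - n_{i+1}`, each `n_i` is an
integer, `t_i ∈ [0,e]`, and the `γ`-invariant of `t` equals `max(α_i, β_i)`. -/
theorem stmt_14 (p f e : ℕ) (hp : p.Prime) (hodd : Odd p) (hf : 1 ≤ f)
    (hdvd : (p ^ f - 1) ∣ e) (hepos : 0 < e)
    (r s : ZMod f → ℤ)
    (hr : ∀ i, 0 ≤ r i ∧ r i ≤ (e : ℤ)) (hs : ∀ i, 0 ≤ s i ∧ s i ≤ (e : ℤ))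
    (α β : ZMod f → ℚ)
    (hα : ∀ i, α i = p * (∑ j ∈ Finset.range f, (p : ℚ) ^ (f - 1 - j) * r (i + (j : ZMod f))) /
      ((p : ℚ) ^ f - 1))
    (hβ : ∀ i, β i = p * (∑ j ∈ Finset.range f, (p : ℚ) ^ (f - 1 - j) * s (i + (j : ZMod f))) /
      ((p : ℚ) ^ f - 1))
    (hint : ∀ i, ∃ k : ℤ, β i - α i = k)
    (n t : ZMod f → ℚ)
    (hn : ∀ i, n i = max 0 (β i - α i) / p)
    (ht : ∀ i, t i = r i + p * n i - n (i + 1)) :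
    (∀ i, ∃ k : ℤ, n i = k) ∧ (∀ i, 0 ≤ t i ∧ t i ≤ (e : ℚ)) ∧
    (∀ i, p * (∑ j ∈ Finset.range f, (p : ℚ) ^ (f - 1 - j) * t (i + (j : ZMod f))) /
      ((p : ℚ) ^ f - 1) = max (α i) (β i)) :=
  stmt_14_general p f e hp hf r s hr hs α β hα hβ hint n t hn ht
end

section
/- Partition of weight set: with p odd, f ≥ 1, e' ≥ 1, b_i generic (e' ≤ b_i + e' ≤ p-1-e'), let W be the set of weights μ(J,d) over all admissible (J,d), and for a ∈ A = {0,...,e'}^f let W_a be the set of μ(J,d) whose associated a (via a_i = d_i+1 if i∈J,i+1∉J; d_i-1 if i∉J,i+1∈J; d_i otherwise) equals a. Then W is the disjoint union of the W_a for a ∈ A, and |W_a| = 2^{f - δ_a} where δ_a = #{i : a_i ∈ {0, e'}}. -/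
/-!
For fixed `J`, the relation `a = pairToTuple σ J d` can be inverted to `d = tupleToPair σ J a`, so
the fiber over `a` is parametrised by the sets `J` alone. Unwinding the bounds on `d`, such a `J`
is admissible exactly when it contains `σ i` for every `i` with `a i = 0` and avoids `σ i` for
every `i` with `a i = e`. Since `e > 0` these two sets of positions are disjoint, of total size
`δ_a`, and the remaining `f - δ_a` positions are free.
-/

open Finset

section

variable {ι : Type*} [DecidableEq ι] (σ : ι → ι)

def IsAdmissiblePair (e : ℤ) (J : Finset ι) (d : ι → ℤ) : Prop :=
  ∀ i, if i ∈ J then 0 ≤ d i ∧ d i ≤ e - 1 else 1 ≤ d i ∧ d i ≤ e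

/-- The tuple `a` attached to `(J, d)`; `σ` plays the role of `i ↦ i + 1` on `ℤ/fℤ`. -/
def pairToTuple (J : Finset ι) (d : ι → ℤ) (i : ι) : ℤ :=
  if i ∈ J ∧ σ i ∉ J then d i + 1 else if i ∉ J ∧ σ i ∈ J then d i - 1 else d i

def tupleToPair (J : Finset ι) (a : ι → ℤ) (i : ι) : ℤ :=
  if i ∈ J ∧ σ i ∉ J then a i - 1 else if i ∉ J ∧ σ i ∈ J then a i + 1 else a i

variable {σ}

theorem pairToTuple_mem_Icc {e : ℤ} {J : Finset ι} {d : ι → ℤ} (hd : IsAdmissiblePair e J d)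
    (i : ι) : 0 ≤ pairToTuple σ J d i ∧ pairToTuple σ J d i ≤ e := by
  have := hd i
  by_cases hi : i ∈ J <;> by_cases hσi : σ i ∈ J <;> simp_all [pairToTuple] <;> omega

theorem tupleToPair_pairToTuple (J : Finset ι) (d : ι → ℤ) :
    tupleToPair σ J (pairToTuple σ J d) = d := by
  ext i
  by_cases hi : i ∈ J <;> by_cases hσi : σ i ∈ J <;> simp [tupleToPair, pairToTuple, hi, hσi]

theorem pairToTuple_tupleToPair (J : Finset ι) (a : ι → ℤ) :
    pairToTuple σ J (tupleToPair σ J a) = a := by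
  ext i
  by_cases hi : i ∈ J <;> by_cases hσi : σ i ∈ J <;> simp [tupleToPair, pairToTuple, hi, hσi]

theorem isAdmissiblePair_tupleToPair_iff {e : ℤ} {a : ι → ℤ} (ha : ∀ i, 0 ≤ a i ∧ a i ≤ e)
    (J : Finset ι) :
    IsAdmissiblePair e J (tupleToPair σ J a) ↔ ∀ i, (a i = 0 → σ i ∈ J) ∧ (a i = e → σ i ∉ J) := by
  refine forall_congr' fun i => ?_
  have := ha i
  by_cases hi : i ∈ J <;> by_cases hσi : σ i ∈ J <;> simp [tupleToPair, hi, hσi] <;> omega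

def pairToTupleFiberEquiv (e : ℤ) (a : ι → ℤ) :
    {Jd : Finset ι × (ι → ℤ) //
        IsAdmissiblePair e Jd.1 Jd.2 ∧ ∀ i, a i = pairToTuple σ Jd.1 Jd.2 i} ≃
      {J : Finset ι // IsAdmissiblePair e J (tupleToPair σ J a)} where
  toFun Jd := ⟨Jd.1.1, by
    obtain ⟨⟨J, d⟩, hd, ha⟩ := Jd
    show IsAdmissiblePair e J (tupleToPair σ J a)
    rwa [show a = pairToTuple σ J d from funext ha, tupleToPair_pairToTuple]⟩
  invFun J := ⟨(J.1, tupleToPair σ J.1 a), J.2, fun i => by rw [pairToTuple_tupleToPair]⟩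
  left_inv := by
    rintro ⟨⟨J, d⟩, hd, ha⟩
    simp only [show a = pairToTuple σ J d from funext ha, tupleToPair_pairToTuple]
  right_inv _ := rfl

theorem natCard_pairToTuple_fiber [Fintype ι] (hσ : σ.Injective) {e : ℤ} (he : 0 < e)
    {a : ι → ℤ} (ha : ∀ i, 0 ≤ a i ∧ a i ≤ e) :
    Nat.card {Jd : Finset ι × (ι → ℤ) //
        IsAdmissiblePair e Jd.1 Jd.2 ∧ ∀ i, a i = pairToTuple σ Jd.1 Jd.2 i} =
      2 ^ (Fintype.card ι - #{i | a i = 0 ∨ a i = e}) := by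
  set I := image σ {i | a i = 0}
  set O := image σ {i | a i = e}
  have hIO : Disjoint I O := by
    rw [disjoint_image hσ, disjoint_filter]
    rintro i - hi rfl
    exact he.ne hi.symm
  have hmem (J : Finset ι) : IsAdmissiblePair e J (tupleToPair σ J a) ↔ J ∈ Icc I Oᶜ := by
    rw [isAdmissiblePair_tupleToPair_iff ha, mem_Icc, subset_compl_iff_disjoint_right,
      disjoint_right, image_subset_iff, forall_mem_image]
    simp [forall_and]
  rw [Nat.card_congr ((pairToTupleFiberEquiv e a).trans (Equiv.subtypeEquivRight hmem)),
    Nat.card_eq_finsetCard, card_Icc_finset (subset_compl_iff_disjoint_right.2 hIO), card_compl,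
    Nat.sub_sub, add_comm, ← card_union_of_disjoint hIO, ← image_union,
    card_image_of_injective _ hσ, filter_or]

end

theorem stmt_15_general (f e' : ℕ) [NeZero f] (he' : 1 ≤ e') :
    (∀ (J : Finset (ZMod f)) (d : ZMod f → ℤ),
      (∀ i, if i ∈ J then 0 ≤ d i ∧ d i ≤ (e' : ℤ) - 1 else 1 ≤ d i ∧ d i ≤ (e' : ℤ)) →
      ∀ i, 0 ≤ (if i ∈ J ∧ i + 1 ∉ J then d i + 1
          else if i ∉ J ∧ i + 1 ∈ J then d i - 1 else d i) ∧
        (if i ∈ J ∧ i + 1 ∉ J then d i + 1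
          else if i ∉ J ∧ i + 1 ∈ J then d i - 1 else d i) ≤ (e' : ℤ)) ∧
    (∀ a : ZMod f → ℤ, (∀ i, 0 ≤ a i ∧ a i ≤ (e' : ℤ)) →
      Nat.card {Jd : Finset (ZMod f) × (ZMod f → ℤ) //
        (∀ i, if i ∈ Jd.1 then 0 ≤ Jd.2 i ∧ Jd.2 i ≤ (e' : ℤ) - 1
          else 1 ≤ Jd.2 i ∧ Jd.2 i ≤ (e' : ℤ)) ∧
        (∀ i, a i = if i ∈ Jd.1 ∧ i + 1 ∉ Jd.1 then Jd.2 i + 1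
          else if i ∉ Jd.1 ∧ i + 1 ∈ Jd.1 then Jd.2 i - 1 else Jd.2 i)} =
      2 ^ (f - (Finset.univ.filter (fun i : ZMod f => a i = 0 ∨ a i = (e' : ℤ))).card)) := by
  refine ⟨fun J d hd => pairToTuple_mem_Icc (σ := (· + 1)) hd, fun a ha => ?_⟩
  exact (natCard_pairToTuple_fiber (add_left_injective 1) (by omega) ha).trans (by rw [ZMod.card])

/-- Partition of the weight set: each admissible pair `(J,d)` yields a tuple
`a ∈ {0,…,e'}^f` (well-definedness), and for each `a` the fiber of admissible
pairs over `a` has cardinality `2^(f - δ_a)`. -/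
theorem stmt_15 (p f e' : ℕ) [NeZero f] (hp : p.Prime) (hodd : Odd p)
    (hf : 1 ≤ f) (he' : 1 ≤ e')
    (b : ZMod f → ℤ)
    (hb : ∀ i, (e' : ℤ) ≤ b i + e' ∧ b i + e' ≤ (p : ℤ) - 1 - e') :
    (∀ (J : Finset (ZMod f)) (d : ZMod f → ℤ),
      (∀ i, if i ∈ J then 0 ≤ d i ∧ d i ≤ (e' : ℤ) - 1 else 1 ≤ d i ∧ d i ≤ (e' : ℤ)) →
      ∀ i, 0 ≤ (if i ∈ J ∧ i + 1 ∉ J then d i + 1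
          else if i ∉ J ∧ i + 1 ∈ J then d i - 1 else d i) ∧
        (if i ∈ J ∧ i + 1 ∉ J then d i + 1
          else if i ∉ J ∧ i + 1 ∈ J then d i - 1 else d i) ≤ (e' : ℤ)) ∧
    (∀ a : ZMod f → ℤ, (∀ i, 0 ≤ a i ∧ a i ≤ (e' : ℤ)) →
      Nat.card {Jd : Finset (ZMod f) × (ZMod f → ℤ) //
        (∀ i, if i ∈ Jd.1 then 0 ≤ Jd.2 i ∧ Jd.2 i ≤ (e' : ℤ) - 1
          else 1 ≤ Jd.2 i ∧ Jd.2 i ≤ (e' : ℤ)) ∧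
        (∀ i, a i = if i ∈ Jd.1 ∧ i + 1 ∉ Jd.1 then Jd.2 i + 1
          else if i ∉ Jd.1 ∧ i + 1 ∈ Jd.1 then Jd.2 i - 1 else Jd.2 i)} =
      2 ^ (f - (Finset.univ.filter (fun i : ZMod f => a i = 0 ∨ a i = (e' : ℤ))).card)) :=
  stmt_15_general f e' he'
end

section
/- Scalar type criterion: with p odd, f ≥ 1, e' ≥ 1, b_i generic (e' ≤ b_i + e' ≤ p-1-e'), and a ∈ A = {0,...,e'}^f, the congruence Σ_{i=0}^{f-1} (b_i + 2a_i) p^{f-i} ≡ 0 (mod p^f - 1) holds if and only if either a_i = b_i = 0 for all i, or a_i = e' and b_i = p-1-2e' for all i. -/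
/-!
Each summand `b_i + 2 a_i` lies in `[0, p - 1]`, so it is a base-`p` digit. Dividing the sum by
`p` (coprime to `p^f - 1`) leaves a number `T` with digits `b_i + 2 a_i`, hence
`0 ≤ T ≤ p^f - 1`; so `p^f - 1 ∣ T` forces `T = 0` or `T = p^f - 1`, i.e. all digits are `0` or
all are `p - 1`. Under the bounds on `a_i` and `b_i` these are exactly the two extreme cases.
-/

open Finset

theorem Finset.sum_mul_eq_zero_iff_of_nonneg {ι R : Type*} [Semiring R] [PartialOrder R]
    [IsOrderedRing R] [NoZeroDivisors R] {s : Finset ι} {x w : ι → R}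
    (hx : ∀ i ∈ s, 0 ≤ x i) (hw : ∀ i ∈ s, 0 < w i) :
    ∑ i ∈ s, x i * w i = 0 ↔ ∀ i ∈ s, x i = 0 := by
  rw [sum_eq_zero_iff_of_nonneg fun i hi => mul_nonneg (hx i hi) (hw i hi).le]
  exact forall₂_congr fun i hi => by simp [(hw i hi).ne']

theorem Finset.sum_mul_eq_const_mul_sum_iff_of_le {ι R : Type*} [Ring R] [PartialOrder R]
    [IsOrderedRing R] [NoZeroDivisors R] {s : Finset ι} {x w : ι → R} {M : R}
    (hx : ∀ i ∈ s, x i ≤ M) (hw : ∀ i ∈ s, 0 < w i) :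
    ∑ i ∈ s, x i * w i = M * ∑ i ∈ s, w i ↔ ∀ i ∈ s, x i = M := by
  have key := sum_mul_eq_zero_iff_of_nonneg (x := fun i => M - x i)
    (fun i hi => sub_nonneg.mpr (hx i hi)) hw
  simp only [sub_mul, sum_sub_distrib, ← mul_sum, sub_eq_zero] at key
  rw [eq_comm, key]
  exact forall₂_congr fun _ _ => eq_comm

theorem Int.dvd_iff_eq_zero_or_eq_of_nonneg_of_le {n m : ℤ} (h0 : 0 ≤ m) (hle : m ≤ n) :
    n ∣ m ↔ m = 0 ∨ m = n := by
  refine ⟨fun hdvd => ?_, ?_⟩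
  · rcases hle.lt_or_eq with hlt | heq
    · exact .inl (Int.eq_zero_of_dvd_of_nonneg_of_lt h0 hlt hdvd)
    · exact .inr heq
  · rintro (rfl | rfl)
    exacts [dvd_zero n, dvd_rfl]

theorem isCoprime_pow_sub_one_self {R : Type*} [CommRing R] (x : R) {n : ℕ} (hn : n ≠ 0) :
    IsCoprime (x ^ n - 1) x :=
  ⟨-1, x ^ (n - 1), by rw [← pow_succ, Nat.sub_add_cancel (Nat.one_le_iff_ne_zero.mpr hn)]; ring⟩

theorem sum_range_sub_one_mul_pow_reflect {R : Type*} [CommRing R] (x : R) (n : ℕ) :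
    ∑ i ∈ range n, (x - 1) * x ^ (n - 1 - i) = x ^ n - 1 := by
  rw [sum_range_reflect (fun j => (x - 1) * x ^ j) n, ← mul_sum, mul_comm, geom_sum_mul]

theorem Int.pow_sub_one_dvd_sum_mul_pow_iff {p : ℤ} {f : ℕ} (c : ℕ → ℤ) (hp : 0 < p)
    (hf : f ≠ 0) (hc : ∀ i ∈ Finset.range f, 0 ≤ c i ∧ c i ≤ p - 1) :
    p ^ f - 1 ∣ ∑ i ∈ Finset.range f, c i * p ^ (f - i) ↔
      (∀ i ∈ Finset.range f, c i = 0) ∨ ∀ i ∈ Finset.range f, c i = p - 1 := by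
  have hw : ∀ i ∈ Finset.range f, 0 < p ^ (f - 1 - i) := fun i _ => pow_pos hp _
  have hsum : ∑ i ∈ Finset.range f, c i * p ^ (f - i) = p * ∑ i ∈ Finset.range f, c i * p ^ (f - 1 - i) := by
    rw [mul_sum]
    refine sum_congr rfl fun i hi => ?_
    rw [show f - i = f - 1 - i + 1 by have := mem_range.mp hi; omega, pow_succ]
    ring
  have hmax : p ^ f - 1 = (p - 1) * ∑ i ∈ Finset.range f, p ^ (f - 1 - i) := by
    rw [mul_sum, sum_range_sub_one_mul_pow_reflect]
  have hT0 : 0 ≤ ∑ i ∈ Finset.range f, c i * p ^ (f - 1 - i) :=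
    sum_nonneg fun i hi => mul_nonneg (hc i hi).1 (hw i hi).le
  have hT1 : ∑ i ∈ Finset.range f, c i * p ^ (f - 1 - i) ≤ p ^ f - 1 := by
    rw [hmax, mul_sum]
    exact sum_le_sum fun i hi => mul_le_mul_of_nonneg_right (hc i hi).2 (hw i hi).le
  have hcop (m : ℤ) : p ^ f - 1 ∣ p * m ↔ p ^ f - 1 ∣ m :=
    ⟨(isCoprime_pow_sub_one_self p hf).dvd_of_dvd_mul_left, (Dvd.dvd.mul_left · p)⟩
  rw [hsum, hcop, dvd_iff_eq_zero_or_eq_of_nonneg_of_le hT0 hT1, hmax,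
    sum_mul_eq_zero_iff_of_nonneg (fun i hi => (hc i hi).1) hw,
    sum_mul_eq_const_mul_sum_iff_of_le (fun i hi => (hc i hi).2) hw]

theorem ZMod.forall_natCast_mem_range_iff {f : ℕ} [NeZero f] {P : ZMod f → Prop} :
    (∀ i ∈ range f, P i) ↔ ∀ j, P j :=
  ⟨fun h j => ZMod.natCast_zmod_val j ▸ h j.val (mem_range.mpr j.val_lt), fun h i _ => h i⟩

theorem stmt_18_general (p f e' : ℕ) (hp : p.Prime) (hf : 1 ≤ f)
    (b a : ZMod f → ℤ)
    (hb : ∀ i, (e' : ℤ) ≤ b i + e' ∧ b i + e' ≤ (p : ℤ) - 1 - e')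
    (ha : ∀ i, 0 ≤ a i ∧ a i ≤ (e' : ℤ)) :
    (((p : ℤ) ^ f - 1) ∣
        ∑ i ∈ Finset.range f, (b (i : ZMod f) + 2 * a (i : ZMod f)) * (p : ℤ) ^ (f - i)) ↔
      ((∀ i, a i = 0 ∧ b i = 0) ∨
        (∀ i, a i = (e' : ℤ) ∧ b i = (p : ℤ) - 1 - 2 * e')) := by
  have : NeZero f := ⟨by omega⟩
  have hdigit : ∀ i ∈ range f, 0 ≤ b (i : ZMod f) + 2 * a (i : ZMod f) ∧
      b (i : ZMod f) + 2 * a (i : ZMod f) ≤ (p : ℤ) - 1 := fun i _ => by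
    have := hb i; have := ha i; omega
  rw [Int.pow_sub_one_dvd_sum_mul_pow_iff _ (by exact_mod_cast hp.pos) (by omega) hdigit,
    ZMod.forall_natCast_mem_range_iff (P := fun j => b j + 2 * a j = 0),
    ZMod.forall_natCast_mem_range_iff (P := fun j => b j + 2 * a j = p - 1)]
  refine or_congr (forall_congr' fun j => ?_) (forall_congr' fun j => ?_) <;>
  · have := hb j; have := ha j; omega

/-- Scalar type criterion: `Σ (b_i + 2 a_i) p^{f-i} ≡ 0 (mod p^f - 1)` holds iff
either `a = b = 0` or `a_i = e'` and `b_i = p - 1 - 2e'` for all `i`. -/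
theorem stmt_18 (p f e' : ℕ) (hp : p.Prime) (hodd : Odd p) (hf : 1 ≤ f) (he' : 1 ≤ e')
    (b a : ZMod f → ℤ)
    (hb : ∀ i, (e' : ℤ) ≤ b i + e' ∧ b i + e' ≤ (p : ℤ) - 1 - e')
    (ha : ∀ i, 0 ≤ a i ∧ a i ≤ (e' : ℤ)) :
    (((p : ℤ) ^ f - 1) ∣
        ∑ i ∈ Finset.range f, (b (i : ZMod f) + 2 * a (i : ZMod f)) * (p : ℤ) ^ (f - i)) ↔
      ((∀ i, a i = 0 ∧ b i = 0) ∨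
        (∀ i, a i = (e' : ℤ) ∧ b i = (p : ℤ) - 1 - 2 * e')) :=
  stmt_18_general p f e' hp hf b a hb ha
end
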